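/- arXiv:2401.09456 — 6 statements merged into one kernel-verified Lean document; each statement's English description precedes it below -/
import Mathlib

section
/- Let 0 < L < 1, 0 < s < 1, 0 < g < 1, 0 < r < 1, with 1 - s - g > 0. Then L'' + r(1 - L'') ≤ L, where L'' = L·s/(L·s+(1-L)(1-g)), holds if and only if L ≥ (1-g)·r/(1-s-g). -/
theorem bkt_post_transition_incorrect_le_iff (L s g r : ℝ)
    (hL0 : 0 < L) (hL1 : L < 1) (hs0 : 0 < s) (hs1 : s < 1)
    (hg0 : 0 < g) (hg1 : g < 1) (hr0 : 0 < r) (hr1 : r < 1)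
    (hsg : 1 - s - g > 0) :
    L * s / (L * s + (1 - L) * (1 - g)) +
      r * (1 - L * s / (L * s + (1 - L) * (1 - g))) ≤ L
    ↔ L ≥ (1 - g) * r / (1 - s - g) := by
  have hD : 0 < L * s + (1 - L) * (1 - g) := by nlinarith
  set D := L * s + (1 - L) * (1 - g) with hDdef
  set e := L * s / D with hedef
  have he : e * D = L * s := div_mul_cancel₀ _ hD.ne'
  rw [ge_iff_le, div_le_iff₀ hsg]
  constructor
  · intro h
    have h2 : (e + r * (1 - e)) * D ≤ L * D :=
      mul_le_mul_of_nonneg_right h hD.le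
    nlinarith [h2, he]
  · intro h
    have key : (e + r * (1 - e)) * D ≤ L * D := by nlinarith [he]
    exact le_of_mul_le_mul_right key hD
end

section
/- Let 0 < s < 1, 0 < g < 1, 0 < r < 1, 1 - s - g > 0, and let U(L) = [L(1-s)/(L(1-s)+(1-L)g)]·(1-r) + r. For a sequence L₀ ∈ (0,1), L_{t+1} = U(L_t), the sequence (L_t) is strictly increasing and converges to 1. -/
theorem bkt_success_iterates_tendsto_one (s g r : ℝ)
    (hs0 : 0 < s) (hs1 : s < 1) (hg0 : 0 < g) (hg1 : g < 1)
    (hr0 : 0 < r) (hr1 : r < 1) (hsg : 1 - s - g > 0)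
    (L : ℕ → ℝ) (hL0 : L 0 ∈ Set.Ioo (0 : ℝ) 1)
    (hstep : ∀ t, L (t + 1) =
      L t * (1 - s) / (L t * (1 - s) + (1 - L t) * g) * (1 - r) + r) :
    StrictMono L ∧ Filter.Tendsto L Filter.atTop (nhds 1) := by
  obtain ⟨h0, h1⟩ := hL0
  set f : ℝ → ℝ := fun x => x * (1 - s) / (x * (1 - s) + (1 - x) * g) * (1 - r) + r with hf
  have key : ∀ x ∈ Set.Ioo (0:ℝ) 1, x < f x ∧ f x < 1 := by
    rintro x ⟨hx0, hx1⟩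
    have hD : 0 < x * (1 - s) + (1 - x) * g := by nlinarith
    have hF1 : x * (1 - s) / (x * (1 - s) + (1 - x) * g) < 1 := by
      rw [div_lt_one hD]; nlinarith
    have hFx : x < x * (1 - s) / (x * (1 - s) + (1 - x) * g) := by
      rw [lt_div_iff₀ hD]; nlinarith [mul_pos (mul_pos hx0 (sub_pos.mpr hx1)) hsg]
    constructor
    · show x < x * (1 - s) / (x * (1 - s) + (1 - x) * g) * (1 - r) + r
      nlinarith
    · show x * (1 - s) / (x * (1 - s) + (1 - x) * g) * (1 - r) + r < 1
      nlinarith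
  have hstep' : ∀ t, L (t + 1) = f (L t) := fun t => hstep t
  have inv : ∀ t, L t ∈ Set.Ioo (0:ℝ) 1 := by
    intro t; induction t with
    | zero => exact ⟨h0, h1⟩
    | succ n ih =>
      obtain ⟨hlt, hlt1⟩ := key _ ih
      rw [hstep' n]
      exact ⟨lt_trans ih.1 hlt, hlt1⟩
  have hmono : StrictMono L := by
    apply strictMono_nat_of_lt_succ
    intro n
    rw [hstep' n]
    exact (key _ (inv n)).1
  refine ⟨hmono, ?_⟩
  have hbdd : BddAbove (Set.range L) := ⟨1, by rintro _ ⟨t, rfl⟩; exact (inv t).2.le⟩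
  have hT : Filter.Tendsto L Filter.atTop (nhds (⨆ t, L t)) :=
    tendsto_atTop_ciSup hmono.monotone hbdd
  set l := ⨆ t, L t with hl
  have hl1 : l ≤ 1 := ciSup_le fun t => (inv t).2.le
  have hl0 : 0 < l := lt_of_lt_of_le h0 (le_ciSup hbdd 0)
  have hleq : l = 1 := by
    by_contra hne
    have hlt1 : l < 1 := lt_of_le_of_ne hl1 hne
    have hDne : l * (1 - s) + (1 - l) * g ≠ 0 := by nlinarith
    have hc : ContinuousAt f l := by
      apply ContinuousAt.add _ continuousAt_const
      apply ContinuousAt.mul _ continuousAt_const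
      exact ContinuousAt.div (by fun_prop) (by fun_prop) hDne
    have h2 : Filter.Tendsto (fun t => f (L t)) Filter.atTop (nhds (f l)) :=
      hc.tendsto.comp hT
    have h3 : Filter.Tendsto (fun t => L (t + 1)) Filter.atTop (nhds l) :=
      hT.comp (Filter.tendsto_add_atTop_nat 1)
    have h4 : (fun t => L (t + 1)) = fun t => f (L t) := funext fun t => hstep' t
    rw [h4] at h3
    have : f l = l := tendsto_nhds_unique h2 h3
    have := (key l ⟨hl0, hlt1⟩).1
    linarith
  rw [← hleq]
  exact hT
end

section
/- Let 0 < s < 1, 0 < g < 1, 0 < r < 1, 1 - s - g > 0, P* = (1-g)r/(1-s-g) < 1, and F(L) = L·s(1-r)/(L·s+(1-L)(1-g)) + r. For a sequence with L₀ ∈ (P*, 1) and L_{t+1} = F(L_t), the sequence (L_t) is strictly decreasing and converges to P*. -/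
theorem bkt_failure_iterates_tendsto_fixed (s g r : ℝ)
    (hs0 : 0 < s) (hs1 : s < 1) (hg0 : 0 < g) (hg1 : g < 1)
    (hr0 : 0 < r) (hr1 : r < 1) (hsg : 1 - s - g > 0)
    (hP1 : (1 - g) * r / (1 - s - g) < 1)
    (L : ℕ → ℝ) (hL0 : L 0 ∈ Set.Ioo ((1 - g) * r / (1 - s - g)) 1)
    (hstep : ∀ t, L (t + 1) =
      L t * s * (1 - r) / (L t * s + (1 - L t) * (1 - g)) + r) :
    StrictAnti L ∧
    Filter.Tendsto L Filter.atTop (nhds ((1 - g) * r / (1 - s - g))) := by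
  obtain ⟨hL0P, hL01⟩ := hL0
  set P : ℝ := (1 - g) * r / (1 - s - g) with hP
  have hP0 : 0 < P := div_pos (mul_pos (by linarith) hr0) hsg
  -- invariant and basic step facts
  have hinv : ∀ t, P < L t ∧ L t < 1 := by
    intro t
    induction t with
    | zero => exact ⟨hL0P, hL01⟩
    | succ t ih =>
      obtain ⟨h1, h2⟩ := ih
      have ha0 : 0 < L t := lt_trans hP0 h1
      have hD : 0 < L t * s + (1 - L t) * (1 - g) := by nlinarith
      have key : L (t + 1) - P = s * (L t - P) / (L t * s + (1 - L t) * (1 - g)) := by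
        rw [hstep t, hP]
        field_simp
        ring
      have hDs : s < L t * s + (1 - L t) * (1 - g) := by nlinarith
      constructor
      · have hpos : 0 < s * (L t - P) / (L t * s + (1 - L t) * (1 - g)) :=
          div_pos (mul_pos hs0 (by linarith)) hD
        linarith
      · have hlt : s * (L t - P) / (L t * s + (1 - L t) * (1 - g)) < L t - P := by
          rw [div_lt_iff₀ hD]
          nlinarith
        linarith
  have hanti : StrictAnti L := by
    apply strictAnti_nat_of_succ_lt
    intro t
    obtain ⟨h1, h2⟩ := hinv t
    have ha0 : 0 < L t := lt_trans hP0 h1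
    have hD : 0 < L t * s + (1 - L t) * (1 - g) := by nlinarith
    have key : L (t + 1) - P = s * (L t - P) / (L t * s + (1 - L t) * (1 - g)) := by
      rw [hstep t, hP]
      field_simp
      ring
    have hDs : s < L t * s + (1 - L t) * (1 - g) := by nlinarith
    have hlt : s * (L t - P) / (L t * s + (1 - L t) * (1 - g)) < L t - P := by
      rw [div_lt_iff₀ hD]
      nlinarith
    linarith
  refine ⟨hanti, ?_⟩
  set D0 : ℝ := L 0 * s + (1 - L 0) * (1 - g) with hD0def
  have hD0 : 0 < D0 := by
    have := lt_trans hP0 hL0P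
    nlinarith
  have hsD0 : s < D0 := by nlinarith
  set q : ℝ := s / D0 with hq
  have hq0 : 0 ≤ q := le_of_lt (div_pos hs0 hD0)
  have hq1 : q < 1 := (div_lt_one hD0).mpr hsD0
  have hbound : ∀ t, L t - P ≤ q ^ t * (L 0 - P) := by
    intro t
    induction t with
    | zero => simp
    | succ t ih =>
      obtain ⟨h1, h2⟩ := hinv t
      have ha0 : 0 < L t := lt_trans hP0 h1
      have hD : 0 < L t * s + (1 - L t) * (1 - g) := by nlinarith
      have key : L (t + 1) - P = s * (L t - P) / (L t * s + (1 - L t) * (1 - g)) := by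
        rw [hstep t, hP]
        field_simp
        ring
      have hLle : L t ≤ L 0 := hanti.antitone (Nat.zero_le t)
      have hDge : D0 ≤ L t * s + (1 - L t) * (1 - g) := by nlinarith
      have step1 : s * (L t - P) / (L t * s + (1 - L t) * (1 - g)) ≤ q * (L t - P) := by
        rw [div_le_iff₀ hD]
        have hqD : q * D0 = s := div_mul_cancel₀ s (ne_of_gt hD0)
        have hLP : (0:ℝ) ≤ L t - P := by linarith
        calc s * (L t - P) = q * (L t - P) * D0 := by rw [← hqD]; ring
          _ ≤ q * (L t - P) * (L t * s + (1 - L t) * (1 - g)) :=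
            mul_le_mul_of_nonneg_left hDge (mul_nonneg hq0 hLP)
      have : q * (L t - P) ≤ q * (q ^ t * (L 0 - P)) :=
        mul_le_mul_of_nonneg_left ih hq0
      calc L (t + 1) - P ≤ q * (L t - P) := by rw [key]; exact step1
        _ ≤ q ^ (t + 1) * (L 0 - P) := by rw [pow_succ]; linarith [this]
  have hlow : ∀ t, P ≤ L t := fun t => le_of_lt (hinv t).1
  have hupper : ∀ t, L t ≤ P + q ^ t * (L 0 - P) := fun t => by linarith [hbound t]
  have hgeo : Filter.Tendsto (fun t : ℕ => P + q ^ t * (L 0 - P)) Filter.atTop (nhds P) := by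
    have h1 : Filter.Tendsto (fun t : ℕ => q ^ t) Filter.atTop (nhds 0) :=
      tendsto_pow_atTop_nhds_zero_of_lt_one hq0 hq1
    have h2 := (h1.mul_const (L 0 - P)).const_add P
    simpa using h2
  exact tendsto_of_tendsto_of_tendsto_of_le_of_le tendsto_const_nhds hgeo hlow hupper
end

section
/- Let 0 < s < 1, 0 < g < 1, 0 < r < 1, 1 - s - g > 0, and P* = (1-g)r/(1-s-g) with P* < 1. For any L ∈ (P*, 1), both the failure update F(L) = L·s(1-r)/(L·s+(1-L)(1-g)) + r and the success update U(L) = L(1-s)(1-r)/(L(1-s)+(1-L)g) + r lie in the open interval (P*, 1). Hence for any sequence of correct/incorrect observations starting in (P*,1), all iterates remain in (P*,1). -/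
theorem bkt_updates_preserve_interval (s g r : ℝ)
    (hs0 : 0 < s) (hs1 : s < 1) (hg0 : 0 < g) (hg1 : g < 1)
    (hr0 : 0 < r) (hr1 : r < 1) (hsg : 1 - s - g > 0)
    (hP1 : (1 - g) * r / (1 - s - g) < 1) :
    (∀ L ∈ Set.Ioo ((1 - g) * r / (1 - s - g)) (1 : ℝ),
      L * s * (1 - r) / (L * s + (1 - L) * (1 - g)) + r ∈
        Set.Ioo ((1 - g) * r / (1 - s - g)) (1 : ℝ) ∧
      L * (1 - s) * (1 - r) / (L * (1 - s) + (1 - L) * g) + r ∈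
        Set.Ioo ((1 - g) * r / (1 - s - g)) (1 : ℝ)) ∧
    (∀ (obs : ℕ → Bool) (L : ℕ → ℝ),
      L 0 ∈ Set.Ioo ((1 - g) * r / (1 - s - g)) (1 : ℝ) →
      (∀ t, L (t + 1) =
        if obs t then L t * (1 - s) * (1 - r) / (L t * (1 - s) + (1 - L t) * g) + r
        else L t * s * (1 - r) / (L t * s + (1 - L t) * (1 - g)) + r) →
      ∀ t, L t ∈ Set.Ioo ((1 - g) * r / (1 - s - g)) (1 : ℝ)) := by
  have hA : (0:ℝ) < 1 - s - g := hsg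
  have hP0 : 0 < (1 - g) * r / (1 - s - g) :=
    div_pos (mul_pos (by linarith) hr0) hA
  have hPr : (1 - g) * r / (1 - s - g) - r = r * s / (1 - s - g) := by
    field_simp; ring
  have hrg : r * (1 - g) < 1 - s - g := by
    have := (div_lt_one hA).mp hP1
    linarith
  have key : ∀ L ∈ Set.Ioo ((1 - g) * r / (1 - s - g)) (1 : ℝ),
      L * s * (1 - r) / (L * s + (1 - L) * (1 - g)) + r ∈
        Set.Ioo ((1 - g) * r / (1 - s - g)) (1 : ℝ) ∧
      L * (1 - s) * (1 - r) / (L * (1 - s) + (1 - L) * g) + r ∈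
        Set.Ioo ((1 - g) * r / (1 - s - g)) (1 : ℝ) := by
    rintro L ⟨hL1, hL2⟩
    have hL0 : 0 < L := hP0.trans hL1
    have hLA : (1 - g) * r < L * (1 - s - g) := (div_lt_iff₀ hA).mp hL1
    have h1L : 0 < 1 - L := by linarith
    have hD : 0 < L * s + (1 - L) * (1 - g) :=
      add_pos (mul_pos hL0 hs0) (mul_pos h1L (by linarith))
    have hD' : 0 < L * (1 - s) + (1 - L) * g :=
      add_pos (mul_pos hL0 (by linarith)) (mul_pos h1L hg0)
    refine ⟨⟨?_, ?_⟩, ?_, ?_⟩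
    · -- P* < F(L)
      have h : r * s / (1 - s - g) < L * s * (1 - r) / (L * s + (1 - L) * (1 - g)) := by
        rw [div_lt_div_iff₀ hA hD]
        nlinarith [mul_pos hs0 (by linarith : (0:ℝ) < L * (1 - s - g) - (1 - g) * r)]
      linarith
    · -- F(L) < 1
      have h : L * s * (1 - r) / (L * s + (1 - L) * (1 - g)) < 1 - r := by
        rw [div_lt_iff₀ hD]
        nlinarith [mul_pos (mul_pos (by linarith : (0:ℝ) < 1 - r) h1L)
          (by linarith : (0:ℝ) < 1 - g)]
      linarith
    · -- P* < U(L)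
      have h : r * s / (1 - s - g) < L * (1 - s) * (1 - r) / (L * (1 - s) + (1 - L) * g) := by
        rw [div_lt_div_iff₀ hA hD']
        nlinarith [mul_pos (mul_pos hr0 hA) h1L,
          mul_pos (by linarith : (0:ℝ) < L * (1 - s - g) - r * (1 - g))
            (by linarith : (0:ℝ) < 1 - s)]
      linarith
    · -- U(L) < 1
      have h : L * (1 - s) * (1 - r) / (L * (1 - s) + (1 - L) * g) < 1 - r := by
        rw [div_lt_iff₀ hD']
        nlinarith [mul_pos (mul_pos (by linarith : (0:ℝ) < 1 - r) h1L) hg0]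
      linarith
  refine ⟨key, ?_⟩
  intro obs L h0 hrec t
  induction t with
  | zero => exact h0
  | succ t ih =>
    rw [hrec t]
    rcases (key (L t) ih) with ⟨hF, hU⟩
    by_cases h : obs t <;> simp [h, hF, hU]
end

section
/- Let 0 < s < 1, 0 < g < 1, 0 < r < 1. A value L ∈ (0,1) preserved by the BKT update after any single observation (i.e., the full update equals L for both the correct-answer and incorrect-answer branches) must in the failure branch equal P* = (1-g)r/(1-s-g); but the success update U(L) = L(1-s)(1-r)/(L(1-s)+(1-L)g)+r has no fixed point in (0,1) when 1-s-g > 0, so when 1-s-g > 0 no such L exists. -/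
theorem bkt_fixed_points_characterization (s g r : ℝ)
    (hs0 : 0 < s) (hs1 : s < 1) (hg0 : 0 < g) (hg1 : g < 1)
    (hr0 : 0 < r) (hr1 : r < 1) (hsg : 1 - s - g > 0) :
    (∀ L ∈ Set.Ioo (0 : ℝ) 1,
      L * s * (1 - r) / (L * s + (1 - L) * (1 - g)) + r = L →
        L = (1 - g) * r / (1 - s - g)) ∧
    (∀ L ∈ Set.Ioo (0 : ℝ) 1,
      L * (1 - s) * (1 - r) / (L * (1 - s) + (1 - L) * g) + r ≠ L) := by
  constructor
  · rintro L ⟨hL0, hL1⟩ h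
    have hD : L * s + (1 - L) * (1 - g) > 0 := by nlinarith
    rw [div_add' _ _ _ (ne_of_gt hD), div_eq_iff (ne_of_gt hD)] at h
    have hfac : (1 - L) * (L * (1 - s - g) - r * (1 - g)) = 0 := by nlinarith
    have h2 : L * (1 - s - g) - r * (1 - g) = 0 := by
      rcases mul_eq_zero.mp hfac with h' | h'
      · linarith
      · exact h'
    rw [eq_div_iff (ne_of_gt hsg)]
    linarith [h2]
  · rintro L ⟨hL0, hL1⟩ h
    have hD : L * (1 - s) + (1 - L) * g > 0 := by nlinarith
    rw [div_add' _ _ _ (ne_of_gt hD), div_eq_iff (ne_of_gt hD)] at h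
    have hfac : (1 - L) * (L * (1 - s - g) + r * g) = 0 := by nlinarith
    rcases mul_eq_zero.mp hfac with h' | h'
    · linarith
    · nlinarith
end

section
/- Let 0 < s < 1, 0 < g < 1, 0 < r < 1, with 1-s-g > 0 and P* = (1-g)r/(1-s-g) < 1. Suppose L_t = P* + ε/(1-s-g) for 0 < ε < (1-s-g)(1-P*). Then the failure update satisfies F(L_t) = P* + ε·s / [ (1-s-g)·((1-g)(1-r) − ε) ], and (1-g)(1-r) − ε > s > 0. -/
theorem bkt_failure_contraction_formula (s g r ε : ℝ)
    (hs0 : 0 < s) (hs1 : s < 1) (hg0 : 0 < g) (hg1 : g < 1)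
    (hr0 : 0 < r) (hr1 : r < 1) (hsg : 1 - s - g > 0)
    (hP1 : (1 - g) * r / (1 - s - g) < 1)
    (hε0 : 0 < ε) (hε1 : ε < (1 - s - g) * (1 - (1 - g) * r / (1 - s - g))) :
    (let L := (1 - g) * r / (1 - s - g) + ε / (1 - s - g);
      L * s * (1 - r) / (L * s + (1 - L) * (1 - g)) + r =
        (1 - g) * r / (1 - s - g) +
          ε * s / ((1 - s - g) * ((1 - g) * (1 - r) - ε))) ∧
    (1 - g) * (1 - r) - ε > s ∧ s > 0 := by
  have hd : (1 : ℝ) - s - g ≠ 0 := ne_of_gt hsg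
  have hε1' : ε < 1 - s - g - (1 - g) * r := by
    have := hε1
    rw [mul_sub, mul_div_cancel₀ _ hd, mul_one] at this
    linarith
  have hkey : (1 - g) * (1 - r) - ε > s := by nlinarith
  refine ⟨?_, hkey, hs0⟩
  intro L
  have hL : L = ((1 - g) * r + ε) / (1 - s - g) := by
    simp only [L]; field_simp
  have hden : L * s + (1 - L) * (1 - g) = (1 - g) * (1 - r) - ε := by
    rw [hL]; field_simp; ring
  rw [hden, hL]
  have hden2 : (1 - g) * (1 - r) - ε ≠ 0 := ne_of_gt (lt_trans hs0 hkey)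
  field_simp
  ring
end
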